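/- arXiv:2307.13227 — 2 statements merged into one kernel-verified Lean document; each statement's English description precedes it below -/
import Mathlib

section
/- If a finite simple connected regular graph G is 6-periodic (the Grover walk on G has period exactly 6), then G is isomorphic to the cycle graph C_6 on 6 vertices. -/
open scoped Classical

/-- The Grover walk time evolution matrix of a simple graph, indexed by darts (arcs). -/
noncomputable def groverMatrix {V : Type*} [Fintype V] [DecidableEq V] (G : SimpleGraph V) :
    Matrix G.Dart G.Dart ℂ :=
  fun a b =>
    if a = b.symm then 2 / (G.degree b.snd : ℂ) - 1
    else if b.snd = a.fst then 2 / (G.degree b.snd : ℂ)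
    else 0

/-- `G` has Grover walk period exactly `τ`: `U^τ = I` and `τ` is the least positive
integer with this property. -/
noncomputable def HasGroverPeriod {V : Type*} [Fintype V] [DecidableEq V]
    (G : SimpleGraph V) (τ : ℕ) : Prop :=
  0 < τ ∧ groverMatrix G ^ τ = 1 ∧
    ∀ s : ℕ, 0 < s → groverMatrix G ^ s = 1 → τ ≤ s

namespace GroverAux

open Finset Matrix

set_option linter.unusedSectionVars false
set_option maxHeartbeats 1000000

variable {V : Type*} [Fintype V] [DecidableEq V] {G : SimpleGraph V} {k : ℕ}

/-- Real version of the Grover matrix of a `k`-regular graph. -/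
noncomputable def M (G : SimpleGraph V) (k : ℕ) : Matrix G.Dart G.Dart ℝ :=
  fun a b => if a = b.symm then 2 / (k : ℝ) - 1 else if b.snd = a.fst then 2 / (k : ℝ) else 0

lemma grover_eq_map (hreg : G.IsRegularOfDegree k) :
    groverMatrix G = (Complex.ofRealHom.mapMatrix : Matrix G.Dart G.Dart ℝ →+* _) (M G k) := by
  ext a b
  simp only [groverMatrix, M, RingHom.mapMatrix_apply, Matrix.map_apply, hreg b.snd]
  split_ifs <;> push_cast <;> simp

lemma M_pow_eq_one_iff (hreg : G.IsRegularOfDegree k) (s : ℕ) :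
    M G k ^ s = 1 ↔ groverMatrix G ^ s = 1 := by
  rw [grover_eq_map hreg, ← map_pow, ← map_one (Complex.ofRealHom.mapMatrix :
    Matrix G.Dart G.Dart ℝ →+* _)]
  constructor
  · intro h; rw [h]
  · intro h
    ext a b
    have h2 := congrArg (fun m => m a b) h
    exact Complex.ofReal_injective (by simpa [RingHom.mapMatrix_apply, Matrix.map_apply] using h2)

lemma dart_fiber_card (v : V) :
    (Finset.univ.filter fun d : G.Dart => d.fst = v).card = G.degree v :=
  G.dart_fst_fiber_card_eq_degree v

lemma dart_snd_fiber_card (v : V) :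
    (Finset.univ.filter fun d : G.Dart => d.snd = v).card = G.degree v := by
  rw [← dart_fiber_card v]
  apply Finset.card_bij (fun d _ => d.symm)
  · intro a ha; simp at ha ⊢; exact ha
  · intro a _ b _ h
    simpa using congrArg SimpleGraph.Dart.symm h
  · intro b hb
    refine ⟨b.symm, ?_, by simp⟩
    simp at hb ⊢; exact hb

lemma M_cases (a b : G.Dart) :
    M G k a b = 0 ∨ (M G k a b = 2 / (k : ℝ) - 1 ∧ a = b.symm) ∨
      (M G k a b = 2 / (k : ℝ) ∧ b.snd = a.fst ∧ a ≠ b.symm) := by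
  by_cases h1 : a = b.symm
  · exact Or.inr (Or.inl ⟨by simp [M, h1], h1⟩)
  · by_cases h2 : b.snd = a.fst
    · exact Or.inr (Or.inr ⟨by simp [M, h1, h2], h2, h1⟩)
    · exact Or.inl (by simp [M, h1, h2])

lemma dart_ext' {c d : G.Dart} (h1 : c.fst = d.fst) (h2 : c.snd = d.snd) : c = d := by
  ext <;> assumption

lemma symm_eq_comm {x c : G.Dart} : x = c.symm ↔ c = x.symm := by
  constructor <;> (rintro rfl; simp)

lemma eq_symm_of {x y : G.Dart} (h1 : x.fst = y.snd) (h2 : x.snd = y.fst) : x = y.symm :=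
  dart_ext' h1 h2

lemma M_of_rev {x y : G.Dart} (h : x = y.symm) : M G k x y = 2/(k:ℝ) - 1 := by
  simp [M, h]

lemma M_of_fwd {x y : G.Dart} (h : y.snd = x.fst) (h2 : x ≠ y.symm) : M G k x y = 2/(k:ℝ) := by
  simp [M, h, h2]

lemma M_struct (a b : G.Dart) :
    M G k a b = if b.snd = a.fst then (if a = b.symm then 2/(k:ℝ) - 1 else 2/(k:ℝ)) else 0 := by
  unfold M
  by_cases h1 : a = b.symm
  · have h2 : b.snd = a.fst := by rw [h1]; rfl
    rw [if_pos h1, if_pos h2, if_pos h1]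
  · rw [if_neg h1]
    by_cases h2 : b.snd = a.fst
    · rw [if_pos h2, if_pos h2, if_neg h1]
    · rw [if_neg h2, if_neg h2]

noncomputable def w (k : ℕ) (x c : G.Dart) : ℝ := if x = c.symm then 2/(k:ℝ) - 1 else 2/(k:ℝ)

lemma M_mul_transpose (hreg : G.IsRegularOfDegree k) (hk : (k:ℝ) ≠ 0) :
    M G k * (M G k)ᵀ = 1 := by
  ext a b
  rw [Matrix.mul_apply]
  simp only [Matrix.transpose_apply]
  by_cases hab : a.fst = b.fst
  · have hsum : ∀ c : G.Dart, M G k a c * M G k b c =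
        if c.snd = a.fst then w k a c * w k b c else 0 := by
      intro c
      rw [M_struct a c, M_struct b c, ← hab]
      unfold w
      by_cases h : c.snd = a.fst
      · simp only [h, if_true]
      · simp only [h, if_false, mul_zero]
    rw [Finset.sum_congr rfl (fun c _ => hsum c), ← Finset.sum_filter]
    set S := Finset.univ.filter fun c : G.Dart => c.snd = a.fst with hS
    have hcard : S.card = k := by rw [hS, dart_snd_fiber_card]; exact hreg a.fst
    have haS : a.symm ∈ S := by simp [hS]
    by_cases hab2 : a = b
    · subst hab2
      have hterm : ∀ c ∈ S, w k a c * w k a c =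
          (2/(k:ℝ))^2 + (if c = a.symm then (2/(k:ℝ)-1)^2 - (2/(k:ℝ))^2 else 0) := by
        intro c _
        unfold w
        by_cases h : c = a.symm
        · rw [if_pos h, if_pos (symm_eq_comm.mpr h)]; ring
        · rw [if_neg h, if_neg (fun hx => h (symm_eq_comm.mp hx))]; ring
      rw [Finset.sum_congr rfl hterm, Finset.sum_add_distrib, Finset.sum_const,
        Finset.sum_ite_eq' S a.symm, if_pos haS, hcard, Matrix.one_apply_eq]
      field_simp
      ring_nf
      field_simp
      ring
    · have hbS : b.symm ∈ S := by simp [hS, ← hab]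
      have hsymm_ne : a.symm ≠ b.symm := fun h => hab2 (by simpa using congrArg SimpleGraph.Dart.symm h)
      have hterm : ∀ c ∈ S, w k a c * w k b c =
          (2/(k:ℝ))^2 + ((if c = a.symm then (2/(k:ℝ)-1)*(2/(k:ℝ)) - (2/(k:ℝ))^2 else 0)
            + (if c = b.symm then (2/(k:ℝ)-1)*(2/(k:ℝ)) - (2/(k:ℝ))^2 else 0)) := by
        intro c _
        unfold w
        by_cases h1 : c = a.symm
        · have h2 : c ≠ b.symm := h1 ▸ hsymm_ne
          have hb : b ≠ c.symm := fun hx => h2 (symm_eq_comm.mp hx)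
          rw [if_pos h1, if_pos (symm_eq_comm.mpr h1), if_neg h2, if_neg hb]; ring
        · by_cases h2 : c = b.symm
          · have ha : a ≠ c.symm := fun hx => h1 (symm_eq_comm.mp hx)
            rw [if_pos h2, if_pos (symm_eq_comm.mpr h2), if_neg h1, if_neg ha]; ring
          · have ha : a ≠ c.symm := fun hx => h1 (symm_eq_comm.mp hx)
            have hb : b ≠ c.symm := fun hx => h2 (symm_eq_comm.mp hx)
            rw [if_neg h1, if_neg h2, if_neg ha, if_neg hb]; ring
      rw [Finset.sum_congr rfl hterm, Finset.sum_add_distrib, Finset.sum_const,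
        Finset.sum_add_distrib, Finset.sum_ite_eq' S a.symm, Finset.sum_ite_eq' S b.symm,
        if_pos haS, if_pos hbS, hcard, Matrix.one_apply_ne hab2]
      field_simp
      ring_nf
      field_simp
      ring
  · have hz : ∀ c : G.Dart, M G k a c * M G k b c = 0 := by
      intro c
      rw [M_struct a c, M_struct b c]
      by_cases h1 : c.snd = a.fst
      · have h2 : ¬ (c.snd = b.fst) := by rw [h1]; exact hab
        simp [h1, h2, hab]
      · simp [h1]
    have : a ≠ b := fun h => hab (by rw [h])
    simp [hz, Matrix.one_apply_ne this]

lemma term_nonneg (a b c d : G.Dart) :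
    0 ≤ M G k a b * M G k b c * M G k c d * M G k d a := by
  by_cases z1 : M G k a b = 0
  · simp [z1]
  by_cases z2 : M G k b c = 0
  · simp [z2]
  by_cases z3 : M G k c d = 0
  · simp [z3]
  by_cases z4 : M G k d a = 0
  · simp [z4]
  have h1 := (M_cases a b).resolve_left z1
  have h2 := (M_cases b c).resolve_left z2
  have h3 := (M_cases c d).resolve_left z3
  have h4 := (M_cases d a).resolve_left z4
  rcases h1 with ⟨e1, r1⟩ | ⟨e1, f1, n1⟩ <;>
    rcases h2 with ⟨e2, r2⟩ | ⟨e2, f2, n2⟩ <;>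
      rcases h3 with ⟨e3, r3⟩ | ⟨e3, f3, n3⟩ <;>
        rcases h4 with ⟨e4, r4⟩ | ⟨e4, f4, n4⟩ <;>
          rw [e1, e2, e3, e4]
  · nlinarith [sq_nonneg ((2/(k:ℝ)-1)*(2/(k:ℝ)-1))]
  · exact absurd (symm_eq_comm.mp (by rw [r1, r2, SimpleGraph.Dart.symm_symm]; exact r3)) n4
  · exact absurd (by rw [symm_eq_comm.mp r2, ← r1]; exact symm_eq_comm.mp r4 :
      c = d.symm) n3
  · nlinarith [sq_nonneg ((2/(k:ℝ)-1)*(2/(k:ℝ)))]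
  · exact absurd (by rw [symm_eq_comm.mp r1, ← r4]; exact symm_eq_comm.mp r3 :
      b = c.symm) n2
  · nlinarith [sq_nonneg ((2/(k:ℝ)-1)*(2/(k:ℝ)))]
  · nlinarith [sq_nonneg ((2/(k:ℝ)-1)*(2/(k:ℝ)))]
  · exact absurd (eq_symm_of f3.symm
      (by rw [f2, ← show a.snd = b.fst from by rw [r1]; rfl]; exact f4) : c = d.symm) n3
  · exact absurd (by rw [r2, r3, SimpleGraph.Dart.symm_symm]; exact symm_eq_comm.mp r4 :
      a = b.symm) n1
  · nlinarith [sq_nonneg ((2/(k:ℝ)-1)*(2/(k:ℝ)))]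
  · nlinarith [sq_nonneg ((2/(k:ℝ)-1)*(2/(k:ℝ)))]
  · exact absurd (eq_symm_of f4.symm
      (by rw [f3, ← show b.snd = c.fst from by rw [r2]; rfl]; exact f1) : d = a.symm) n4
  · nlinarith [sq_nonneg ((2/(k:ℝ)-1)*(2/(k:ℝ)))]
  · exact absurd (eq_symm_of f1.symm
      (by rw [f4, ← show c.snd = d.fst from by rw [r3]; rfl]; exact f2) : a = b.symm) n1
  · exact absurd (eq_symm_of f2.symm
      (by rw [f1, ← show d.snd = a.fst from by rw [r4]; rfl]; exact f3) : b = c.symm) n2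
  · positivity

lemma M_rev_self (a : G.Dart) : M G k a a.symm = 2/(k:ℝ) - 1 := M_of_rev (by simp)

lemma M_rev_self' (a : G.Dart) : M G k a.symm a = 2/(k:ℝ) - 1 := M_of_rev rfl

lemma trace_M_sq : trace (M G k ^ 2) = (Fintype.card G.Dart : ℝ) * (2/(k:ℝ) - 1)^2 := by
  rw [pow_two]
  rw [Matrix.trace]
  have h : ∀ a : G.Dart, (M G k * M G k) a a = (2/(k:ℝ) - 1)^2 := by
    intro a
    rw [Matrix.mul_apply]
    rw [Finset.sum_eq_single a.symm]
    · rw [M_rev_self, M_rev_self']; ring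
    · intro c _ hc
      by_cases z1 : M G k a c = 0
      · rw [z1, zero_mul]
      by_cases z2 : M G k c a = 0
      · rw [z2, mul_zero]
      exfalso
      apply hc
      have h1 : c.snd = a.fst := by
        by_cases h : a = c.symm
        · rw [h]; rfl
        · by_contra hne
          exact z1 (by simp [M, h, hne])
      have h2 : a.snd = c.fst := by
        by_cases h : c = a.symm
        · rw [h]; rfl
        · by_contra hne
          exact z2 (by simp [M, h, hne])
      exact SimpleGraph.Dart.ext _ _ (Prod.ext h2.symm h1)
    · intro h; exact absurd (Finset.mem_univ _) h
  simp only [Matrix.diag_apply, h, Finset.sum_const, Finset.card_univ, nsmul_eq_mul]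

lemma M4_diag (a : G.Dart) :
    (M G k ^ 4) a a =
      ∑ p : G.Dart × G.Dart × G.Dart,
        M G k a p.1 * (M G k p.1 p.2.1 * (M G k p.2.1 p.2.2 * M G k p.2.2 a)) := by
  have h4 : M G k ^ 4 = M G k * (M G k * (M G k * M G k)) := by
    rw [show (4 : ℕ) = 1 + 1 + 1 + 1 by rfl]
    rw [pow_add, pow_add, pow_add, pow_one]
    noncomm_ring
  rw [h4]
  simp only [Matrix.mul_apply, Finset.mul_sum, Fintype.sum_prod_type]

/-- The chosen triple set for the fourth-power trace lower bound. -/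
noncomputable def S (a : G.Dart) : Finset (G.Dart × G.Dart × G.Dart) :=
  insert (a.symm, a, a.symm)
    (((Finset.univ.filter fun c : G.Dart => c.fst = a.fst ∧ c ≠ a).image
        fun c => (c.symm, c, a.symm)) ∪
      ((Finset.univ.filter fun d : G.Dart => d.fst = a.snd ∧ d ≠ a.symm).image
        fun d => (a.symm, d.symm, d)))

lemma sum_S (hreg : G.IsRegularOfDegree k) (a : G.Dart) :
    ∑ p ∈ S a, M G k a p.1 * (M G k p.1 p.2.1 * (M G k p.2.1 p.2.2 * M G k p.2.2 a)) =
      (2/(k:ℝ) - 1)^4 + 2 * ((k:ℝ) - 1) * ((2/(k:ℝ))^2 * (2/(k:ℝ) - 1)^2) := by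
  set t : ℝ := 2/(k:ℝ) with ht
  have hnotmem : (a.symm, a, a.symm) ∉
      ((Finset.univ.filter fun c : G.Dart => c.fst = a.fst ∧ c ≠ a).image
        fun c => (c.symm, c, a.symm)) ∪
      ((Finset.univ.filter fun d : G.Dart => d.fst = a.snd ∧ d ≠ a.symm).image
        fun d => (a.symm, d.symm, d)) := by
    intro h
    rcases Finset.mem_union.mp h with h | h
    · obtain ⟨c, hc, hce⟩ := Finset.mem_image.mp h
      obtain ⟨-, -, hc2⟩ := Finset.mem_filter.mp hc
      exact hc2 (congrArg (fun p => p.2.1) hce)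
    · obtain ⟨d, hd, hde⟩ := Finset.mem_image.mp h
      obtain ⟨-, -, hd2⟩ := Finset.mem_filter.mp hd
      exact hd2 ((congrArg (fun p => p.2.2) hde))
  have hdisj : Disjoint
      ((Finset.univ.filter fun c : G.Dart => c.fst = a.fst ∧ c ≠ a).image
        fun c => (c.symm, c, a.symm))
      ((Finset.univ.filter fun d : G.Dart => d.fst = a.snd ∧ d ≠ a.symm).image
        fun d => (a.symm, d.symm, d)) := by
    rw [Finset.disjoint_left]
    intro p hp hp'
    obtain ⟨c, hc, hce⟩ := Finset.mem_image.mp hp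
    obtain ⟨d, hd, hde⟩ := Finset.mem_image.mp hp'
    obtain ⟨-, -, hd2⟩ := Finset.mem_filter.mp hd
    apply hd2
    have h3 : p.2.2 = a.symm := by rw [← hce]
    have h4 : p.2.2 = d := by rw [← hde]
    rw [← h4, h3]
  rw [S, Finset.sum_insert hnotmem, Finset.sum_union hdisj]
  have hinj1 : Set.InjOn (fun c : G.Dart => ((c.symm, c, a.symm) : G.Dart × G.Dart × G.Dart))
      ((Finset.univ.filter fun c : G.Dart => c.fst = a.fst ∧ c ≠ a) : Finset G.Dart) := by
    intro x _ y _ h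
    exact congrArg (fun p => p.2.1) h
  have hinj2 : Set.InjOn (fun d : G.Dart => ((a.symm, d.symm, d) : G.Dart × G.Dart × G.Dart))
      ((Finset.univ.filter fun d : G.Dart => d.fst = a.snd ∧ d ≠ a.symm) : Finset G.Dart) := by
    intro x _ y _ h
    exact congrArg (fun p => p.2.2) h
  rw [Finset.sum_image hinj1, Finset.sum_image hinj2]
  have hv1 : M G k a a.symm * (M G k a.symm a * (M G k a a.symm * M G k a.symm a)) =
      (t - 1)^4 := by
    rw [M_of_rev (by simp), M_of_rev rfl]; ring
  have hv2 : ∀ c ∈ Finset.univ.filter fun c : G.Dart => c.fst = a.fst ∧ c ≠ a,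
      M G k a c.symm * (M G k c.symm c * (M G k c a.symm * M G k a.symm a)) =
        t^2 * (t - 1)^2 := by
    intro c hc
    obtain ⟨-, hc1, hc2⟩ := Finset.mem_filter.mp hc
    rw [M_of_fwd (show c.fst = a.fst from hc1) (by simpa using fun h => hc2 h.symm),
      M_of_rev rfl,
      M_of_fwd (show a.fst = c.fst from hc1.symm) (by simpa using hc2),
      M_of_rev rfl]
    ring
  have hv3 : ∀ d ∈ Finset.univ.filter fun d : G.Dart => d.fst = a.snd ∧ d ≠ a.symm,
      M G k a a.symm * (M G k a.symm d.symm * (M G k d.symm d * M G k d a)) =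
        t^2 * (t - 1)^2 := by
    intro d hd
    obtain ⟨-, hd1, hd2⟩ := Finset.mem_filter.mp hd
    rw [M_of_rev (by simp),
      M_of_fwd (show d.fst = a.snd from hd1) (by simpa using fun h => hd2 h.symm),
      M_of_rev rfl,
      M_of_fwd (show a.snd = d.fst from hd1.symm) hd2]
    ring
  rw [Finset.sum_congr rfl hv2, Finset.sum_congr rfl hv3, Finset.sum_const, Finset.sum_const]
  have hcard1 : (Finset.univ.filter fun c : G.Dart => c.fst = a.fst ∧ c ≠ a).card = k - 1 := by
    have : (Finset.univ.filter fun c : G.Dart => c.fst = a.fst ∧ c ≠ a) =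
        (Finset.univ.filter fun c : G.Dart => c.fst = a.fst).erase a := by
      ext c
      simp [Finset.mem_erase, and_comm]
    rw [this, Finset.card_erase_of_mem (by simp), dart_fiber_card, hreg a.fst]
  have hcard2 : (Finset.univ.filter fun d : G.Dart => d.fst = a.snd ∧ d ≠ a.symm).card = k - 1 := by
    have : (Finset.univ.filter fun d : G.Dart => d.fst = a.snd ∧ d ≠ a.symm) =
        (Finset.univ.filter fun d : G.Dart => d.fst = a.snd).erase a.symm := by
      ext d
      simp [Finset.mem_erase, and_comm]
    rw [this, Finset.card_erase_of_mem (by simp), dart_fiber_card, hreg a.snd]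
  rw [hv1, hcard1, hcard2]
  have hk1 : 1 ≤ k := by
    have := hreg a.fst
    have h2 : 0 < G.degree a.fst := by
      rw [SimpleGraph.degree_pos_iff_exists_adj]
      exact ⟨a.snd, a.adj⟩
    omega
  have : ((k - 1 : ℕ) : ℝ) = (k : ℝ) - 1 := by
    push_cast [hk1]; ring
  rw [nsmul_eq_mul, this]
  ring

/-- `k ≥ 3` is impossible for a `6`-periodic regular graph. -/
lemma k_not_ge_three (hreg : G.IsRegularOfDegree k) (hdart : Nonempty G.Dart)
    (h6 : M G k ^ 6 = 1) (hk : 3 ≤ k) : False := by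
  have hkR : (3:ℝ) ≤ (k:ℝ) := by exact_mod_cast hk
  have hk0 : (k:ℝ) ≠ 0 := by linarith
  have horth := M_mul_transpose hreg hk0
  have horth' : (M G k)ᵀ * M G k = 1 := mul_eq_one_comm.mp horth
  have hM2 : M G k ^ 2 * (M G k ^ 2)ᵀ = 1 := by
    rw [pow_two, Matrix.transpose_mul]
    calc M G k * M G k * ((M G k)ᵀ * (M G k)ᵀ)
        = M G k * (M G k * (M G k)ᵀ) * (M G k)ᵀ := by noncomm_ring
      _ = 1 := by rw [horth, mul_one, horth]
  have h42 : M G k ^ 4 = (M G k ^ 2)ᵀ := by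
    have h1 : M G k ^ 4 * M G k ^ 2 = 1 := by
      rw [← pow_add]; exact h6
    calc M G k ^ 4 = M G k ^ 4 * (M G k ^ 2 * (M G k ^ 2)ᵀ) := by rw [hM2, mul_one]
      _ = (M G k ^ 4 * M G k ^ 2) * (M G k ^ 2)ᵀ := by noncomm_ring
      _ = (M G k ^ 2)ᵀ := by rw [h1, one_mul]
  have htr : trace (M G k ^ 4) = trace (M G k ^ 2) := by
    rw [h42, Matrix.trace_transpose]
  set N : ℝ := (Fintype.card G.Dart : ℝ) with hN
  have hNpos : 0 < N := by
    rw [hN]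
    exact_mod_cast Fintype.card_pos
  have hlow : N * ((2/(k:ℝ) - 1)^4 + 2 * ((k:ℝ) - 1) * ((2/(k:ℝ))^2 * (2/(k:ℝ) - 1)^2)) ≤
      trace (M G k ^ 4) := by
    rw [Matrix.trace]
    have hbound : ∀ a : G.Dart,
        (2/(k:ℝ) - 1)^4 + 2 * ((k:ℝ) - 1) * ((2/(k:ℝ))^2 * (2/(k:ℝ) - 1)^2) ≤
          (M G k ^ 4) a a := by
      intro a
      rw [M4_diag a, ← sum_S hreg a]
      apply Finset.sum_le_sum_of_subset_of_nonneg (Finset.subset_univ _)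
      intro p _ _
      have := term_nonneg (k := k) a p.1 p.2.1 p.2.2
      linarith [this, (by ring :
        M G k a p.1 * M G k p.1 p.2.1 * M G k p.2.1 p.2.2 * M G k p.2.2 a =
        M G k a p.1 * (M G k p.1 p.2.1 * (M G k p.2.1 p.2.2 * M G k p.2.2 a)))]
    calc N * ((2/(k:ℝ) - 1)^4 + 2 * ((k:ℝ) - 1) * ((2/(k:ℝ))^2 * (2/(k:ℝ) - 1)^2))
        = ∑ _a : G.Dart, ((2/(k:ℝ) - 1)^4 + 2 * ((k:ℝ) - 1) * ((2/(k:ℝ))^2 * (2/(k:ℝ) - 1)^2)) := by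
          rw [Finset.sum_const, Finset.card_univ, nsmul_eq_mul, hN]
      _ ≤ ∑ a : G.Dart, (M G k ^ 4).diag a := Finset.sum_le_sum (fun a _ => hbound a)
  rw [htr, trace_M_sq, ← hN] at hlow
  have key : (2/(k:ℝ)-1)^4 + 2*((k:ℝ)-1)*((2/(k:ℝ))^2*(2/(k:ℝ)-1)^2) ≤ (2/(k:ℝ)-1)^2 :=
    le_of_mul_le_mul_left (by linarith) hNpos
  set x : ℝ := (k:ℝ) with hx
  have hxpos : (0:ℝ) < x := by linarith
  set t : ℝ := 2/x with htdef
  have htx : t * x = 2 := by rw [htdef]; field_simp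
  have ht0 : 0 < t := by positivity
  have ht1 : t ≤ 2/3 := by
    rw [htdef, div_le_div_iff₀ hxpos (by norm_num)]; linarith
  have h2 : 2*(x-1)*t^2 = 4*t - 2*t^2 := by linear_combination (2*t)*htx
  have key2 : (t-1)^4 + (4*t-2*t^2)*(t-1)^2 ≤ (t-1)^2 := by nlinarith [key]
  have h3 : (t-1)^2 ≥ 1/9 := by nlinarith
  nlinarith [key2, mul_pos ht0 (show (0:ℝ) < 2 - t by linarith), h3]




lemma M_one_apply (hreg : G.IsRegularOfDegree 1) (a b : G.Dart) :
    M G 1 a b = if a = b.symm then 1 else 0 := by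
  by_cases h1 : a = b.symm
  · simp [M, h1]
    norm_num
  · rw [if_neg h1]
    by_cases h2 : b.snd = a.fst
    · exfalso
      have hmem1 : a ∈ Finset.univ.filter fun d : G.Dart => d.fst = b.snd := by simp [h2.symm]
      have hmem2 : b.symm ∈ Finset.univ.filter fun d : G.Dart => d.fst = b.snd := by simp
      have hlt : 1 < (Finset.univ.filter fun d : G.Dart => d.fst = b.snd).card :=
        Finset.one_lt_card.mpr ⟨a, hmem1, b.symm, hmem2, h1⟩
      rw [dart_fiber_card, hreg b.snd] at hlt
      omega
    · simp [M, h1, h2]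

lemma M_one_sq (hreg : G.IsRegularOfDegree 1) : M G 1 ^ 2 = 1 := by
  ext a b
  rw [pow_two, Matrix.mul_apply]
  rw [Finset.sum_congr rfl (fun c _ => by rw [M_one_apply hreg, M_one_apply hreg])]
  rw [Finset.sum_congr rfl (fun c _ => (by by_cases h : c = b.symm <;> simp [h] :
    (if a = c.symm then (1:ℝ) else 0) * (if c = b.symm then (1:ℝ) else 0) =
      if c = b.symm then (if a = c.symm then (1:ℝ) else 0) else 0))]
  rw [Finset.sum_ite_eq' Finset.univ b.symm, if_pos (Finset.mem_univ _)]
  simp [Matrix.one_apply]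


variable (hreg : G.IsRegularOfDegree 2)
include hreg




/-- With degree 2, there are exactly two darts out of each vertex. -/
lemma two_darts {v : V} {x y : G.Dart} (hx : x.fst = v) (hy : y.fst = v) (hxy : x ≠ y)
    {c : G.Dart} (hc : c.fst = v) : c = x ∨ c = y := by
  have hsub : ({x, y} : Finset G.Dart) ⊆ Finset.univ.filter fun d : G.Dart => d.fst = v := by
    intro z hz
    rcases Finset.mem_insert.mp hz with rfl | hz
    · simp [hx]
    · rcases Finset.mem_singleton.mp hz with rfl
      simp [hy]
  have hcards : (Finset.univ.filter fun d : G.Dart => d.fst = v).card ≤ ({x, y} : Finset G.Dart).card := by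
    rw [dart_fiber_card, hreg v, Finset.card_insert_of_notMem (by simp [hxy]), Finset.card_singleton]
  have := Finset.eq_of_subset_of_card_le hsub hcards
  have hcmem : c ∈ ({x, y} : Finset G.Dart) := by
    rw [this]; simp [hc]
  simpa using hcmem

lemma nxt_exists_unique (d : G.Dart) : ∃! a : G.Dart, a.fst = d.snd ∧ a ≠ d.symm := by
  have hcard : (Finset.univ.filter fun a : G.Dart => a.fst = d.snd).card = 2 := by
    rw [dart_fiber_card, hreg d.snd]
  have hmem : d.symm ∈ Finset.univ.filter fun a : G.Dart => a.fst = d.snd := by simp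
  have herase : ((Finset.univ.filter fun a : G.Dart => a.fst = d.snd).erase d.symm).card = 1 := by
    rw [Finset.card_erase_of_mem hmem, hcard]
  obtain ⟨a, ha⟩ := Finset.card_eq_one.mp herase
  refine ⟨a, ?_, ?_⟩
  · have : a ∈ (Finset.univ.filter fun a : G.Dart => a.fst = d.snd).erase d.symm := by
      rw [ha]; exact Finset.mem_singleton_self a
    have h2 := Finset.mem_of_mem_erase this
    exact ⟨(Finset.mem_filter.mp h2).2, Finset.ne_of_mem_erase this⟩
  · intro b hb
    have : b ∈ (Finset.univ.filter fun a : G.Dart => a.fst = d.snd).erase d.symm := by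
      exact Finset.mem_erase.mpr ⟨hb.2, by simp [hb.1]⟩
    rw [ha] at this
    exact Finset.mem_singleton.mp this

/-- The successor dart in the 2-regular case. -/
noncomputable def nxt (d : G.Dart) : G.Dart := (nxt_exists_unique hreg d).choose

lemma nxt_fst (d : G.Dart) : (nxt hreg d).fst = d.snd :=
  (nxt_exists_unique hreg d).choose_spec.1.1

lemma nxt_ne (d : G.Dart) : nxt hreg d ≠ d.symm :=
  (nxt_exists_unique hreg d).choose_spec.1.2

lemma nxt_unique {a d : G.Dart} (h1 : a.fst = d.snd) (h2 : a ≠ d.symm) : a = nxt hreg d :=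
  (nxt_exists_unique hreg d).choose_spec.2 a ⟨h1, h2⟩

lemma nxt_inj : Function.Injective (nxt hreg) := by
  intro d1 d2 h
  have h1 : d1.symm.fst = (nxt hreg d1).fst := (nxt_fst hreg d1).symm
  have h2 : d2.symm.fst = (nxt hreg d1).fst := by rw [h]; exact (nxt_fst hreg d2).symm
  by_cases hd : d1.symm = d2.symm
  · simpa using congrArg SimpleGraph.Dart.symm hd
  · rcases two_darts hreg h1 h2 hd (c := nxt hreg d1) rfl with h3 | h3
    · exact absurd h3 (nxt_ne hreg d1)
    · rw [h] at h3; exact absurd h3 (nxt_ne hreg d2)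

lemma nxt_symm_nxt (d : G.Dart) : nxt hreg ((nxt hreg d).symm) = d.symm := by
  refine (nxt_unique hreg ?_ ?_).symm
  · exact (nxt_fst hreg d).symm
  · intro h
    apply nxt_ne hreg d
    have hss : ((nxt hreg d).symm).symm = nxt hreg d := by simp
    rw [hss] at h
    exact h.symm




lemma M_two_apply (a b : G.Dart) :
    M G 2 a b = if a = nxt hreg b then 1 else 0 := by
  by_cases h1 : a = b.symm
  · have hne : a ≠ nxt hreg b := by
      rw [h1]
      intro h
      exact nxt_ne hreg b h.symm
    have hval : M G 2 a b = 0 := by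
      unfold M
      rw [if_pos h1]
      norm_num
    rw [hval, if_neg hne]
  · by_cases h2 : b.snd = a.fst
    · have heq : a = nxt hreg b := nxt_unique hreg h2.symm h1
      have hval : M G 2 a b = 1 := by
        unfold M
        rw [if_neg h1, if_pos h2]
        norm_num
      rw [hval, if_pos heq]
    · have hne : a ≠ nxt hreg b := by
        intro h
        exact h2 (by rw [h, nxt_fst])
      have hval : M G 2 a b = 0 := by
        unfold M
        rw [if_neg h1, if_neg h2]
      rw [hval, if_neg hne]

lemma M_two_pow (s : ℕ) (a b : G.Dart) :
    (M G 2 ^ s) a b = if a = (nxt hreg)^[s] b then 1 else 0 := by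
  induction s generalizing a b with
  | zero => simp [Matrix.one_apply]; congr
  | succ n ih =>
    rw [pow_succ']
    rw [Matrix.mul_apply]
    rw [Finset.sum_congr rfl (fun c _ => by rw [M_two_apply hreg, ih])]
    rw [Finset.sum_congr rfl (fun c _ => (by by_cases h : c = (nxt hreg)^[n] b <;> simp [h] :
      (if a = nxt hreg c then (1:ℝ) else 0) * (if c = (nxt hreg)^[n] b then (1:ℝ) else 0) =
        if c = (nxt hreg)^[n] b then (if a = nxt hreg c then (1:ℝ) else 0) else 0))]
    rw [Finset.sum_ite_eq' Finset.univ ((nxt hreg)^[n] b)]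
    simp [Function.iterate_succ_apply']

lemma M_two_pow_eq_one_iff (s : ℕ) :
    M G 2 ^ s = 1 ↔ ∀ d : G.Dart, (nxt hreg)^[s] d = d := by
  constructor
  · intro h d
    have := congrArg (fun m : Matrix G.Dart G.Dart ℝ => m d d) h
    simp only [M_two_pow hreg, Matrix.one_apply_eq] at this
    by_contra hne
    rw [if_neg (fun hE => hne hE.symm)] at this
    norm_num at this
  · intro h
    ext a b
    rw [M_two_pow hreg, h b, Matrix.one_apply]

/-- there are at least three vertices -/
lemma card_ge_three (d0 : G.Dart) : 3 ≤ Fintype.card V := by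
  have e1 := nxt hreg d0
  have hne1 : d0.snd ≠ d0.fst := d0.snd_ne_fst
  have w := (nxt hreg d0).snd
  have hw1 : (nxt hreg d0).snd ≠ d0.snd := by
    rw [← nxt_fst hreg d0]
    exact (nxt hreg d0).snd_ne_fst
  have hw2 : (nxt hreg d0).snd ≠ d0.fst := by
    intro h
    apply nxt_ne hreg d0
    exact dart_ext' (nxt_fst hreg d0) h
  have : ({d0.fst, d0.snd, (nxt hreg d0).snd} : Finset V).card = 3 := by
    rw [Finset.card_insert_of_notMem (by simp [hne1.symm, hw2.symm]),
      Finset.card_insert_of_notMem (by simp [hw1.symm]), Finset.card_singleton]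
  calc 3 = ({d0.fst, d0.snd, (nxt hreg d0).snd} : Finset V).card := this.symm
    _ ≤ Fintype.card V := Finset.card_le_univ _

/-- on three vertices, the walk returns after three steps -/
lemma nxt_three (hcard : Fintype.card V = 3) (d : G.Dart) :
    (nxt hreg)^[3] d = d := by
  set e1 := nxt hreg d with he1
  set e2 := nxt hreg e1 with he2
  set e3 := nxt hreg e2 with he3
  have hf1 : e1.fst = d.snd := nxt_fst hreg d
  have hf2 : e2.fst = e1.snd := nxt_fst hreg e1
  have hf3 : e3.fst = e2.snd := nxt_fst hreg e2
  -- the three distinct vertices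
  have h1 : e1.snd ≠ d.snd := by rw [← hf1]; exact e1.snd_ne_fst
  have h2 : e1.snd ≠ d.fst := by
    intro h
    exact nxt_ne hreg d (dart_ext' hf1 h)
  have huniv : ∀ v : V, v = d.fst ∨ v = d.snd ∨ v = e1.snd := by
    intro v
    have hsub : ({d.fst, d.snd, e1.snd} : Finset V) ⊆ Finset.univ := Finset.subset_univ _
    have hcard3 : ({d.fst, d.snd, e1.snd} : Finset V).card = 3 := by
      rw [Finset.card_insert_of_notMem (by simp [d.snd_ne_fst.symm, h2.symm]),
        Finset.card_insert_of_notMem (by simp [h1.symm]), Finset.card_singleton]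
    have : ({d.fst, d.snd, e1.snd} : Finset V) = Finset.univ :=
      Finset.eq_of_subset_of_card_le hsub (by rw [hcard3, ← hcard]; simp [Finset.card_univ])
    have hv : v ∈ ({d.fst, d.snd, e1.snd} : Finset V) := by rw [this]; simp
    simpa using hv
  -- e2.snd = d.fst
  have he2snd : e2.snd = d.fst := by
    rcases huniv e2.snd with h | h | h
    · exact h
    · exfalso
      apply nxt_ne hreg e1
      apply dart_ext' hf2
      rw [h, ← hf1]
      rfl
    · exfalso
      have := e2.snd_ne_fst
      rw [hf2] at this
      exact this h
  -- e3.snd = d.snd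
  have he3snd : e3.snd = d.snd := by
    rcases huniv e3.snd with h | h | h
    · exfalso
      have := e3.snd_ne_fst
      rw [hf3, he2snd] at this
      exact this h
    · exact h
    · exfalso
      apply nxt_ne hreg e2
      apply dart_ext' hf3
      rw [h, ← hf2]
      rfl
  have : e3 = d := dart_ext' (by rw [hf3, he2snd]) he3snd
  show nxt hreg (nxt hreg (nxt hreg d)) = d
  rw [← he1, ← he2, ← he3]
  exact this


lemma iter_period (hper6 : ∀ d : G.Dart, (nxt hreg)^[6] d = d) (n : ℕ) (d : G.Dart) :
    (nxt hreg)^[n + 6] d = (nxt hreg)^[n] d := by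
  rw [Function.iterate_add_apply, hper6 d]

lemma pred_dart (hper6 : ∀ d : G.Dart, (nxt hreg)^[6] d = d) (i : ℕ) (d0 : G.Dart) :
    nxt hreg ((nxt hreg)^[i + 5] d0) = (nxt hreg)^[i] d0 := by
  have h1 : (nxt hreg)^[i+5+1] d0 = nxt hreg ((nxt hreg)^[i+5] d0) :=
    Function.iterate_succ_apply' _ _ _
  rw [← h1, show i+5+1 = i+6 from by omega, iter_period hreg hper6]

lemma step (hper6 : ∀ d : G.Dart, (nxt hreg)^[6] d = d) (d0 : G.Dart) (i : ℕ) (v : V)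
    (hadj : G.Adj ((nxt hreg)^[i] d0).fst v) :
    ∃ j, ((nxt hreg)^[j] d0).fst = v := by
  set e := (nxt hreg)^[i] d0 with he
  set p := (nxt hreg)^[i + 5] d0 with hp
  have hnp : nxt hreg p = e := pred_dart hreg hper6 i d0
  have hy : p.symm.fst = e.fst := by
    show p.snd = e.fst
    rw [← hnp, nxt_fst]
  have hxy : e ≠ p.symm := by
    rw [← hnp]; exact nxt_ne hreg p
  set c : G.Dart := ⟨(e.fst, v), hadj⟩ with hc
  have hcf : c.fst = e.fst := rfl
  rcases two_darts hreg (x := e) (y := p.symm) rfl hy hxy hcf with h | h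
  · refine ⟨i + 1, ?_⟩
    rw [Function.iterate_succ_apply', ← he, nxt_fst]
    show e.snd = v
    have := congrArg (fun d : G.Dart => d.snd) h
    exact this.symm
  · refine ⟨i + 5, ?_⟩
    show p.fst = v
    have := congrArg (fun d : G.Dart => d.snd) h
    exact this.symm

lemma surj (hconn : G.Connected) (hper6 : ∀ d : G.Dart, (nxt hreg)^[6] d = d)
    (d0 : G.Dart) (v : V) : ∃ i, ((nxt hreg)^[i] d0).fst = v := by
  have key : ∀ (u v' : V) (_ : G.Walk u v'),
      (∃ i, ((nxt hreg)^[i] d0).fst = u) → ∃ j, ((nxt hreg)^[j] d0).fst = v' := by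
    intro u v' wlk
    induction wlk with
    | nil => exact id
    | cons hadj p ih =>
      rintro ⟨i, hi⟩
      apply ih
      rw [← hi] at hadj
      exact step hreg hper6 d0 i _ hadj
  exact key d0.fst v ((hconn.preconnected d0.fst v).some) ⟨0, rfl⟩

lemma card_eq_three_of_periodic (hconn : G.Connected)
    (hper6 : ∀ d : G.Dart, (nxt hreg)^[6] d = d) {c : G.Dart} {m : ℕ}
    (hm0 : 0 < m) (hm5 : m ≤ 5) (hc : (nxt hreg)^[m] c = c) : Fintype.card V = 3 := by
  have hpp : Function.IsPeriodicPt (nxt hreg) m c := hc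
  have hpp6 : Function.IsPeriodicPt (nxt hreg) 6 c := hper6 c
  obtain ⟨p, hpdef⟩ : ∃ p, Function.minimalPeriod (nxt hreg) c = p := ⟨_, rfl⟩
  have hdvd : p ∣ m := hpdef ▸ hpp.minimalPeriod_dvd
  have hdvd6 : p ∣ 6 := hpdef ▸ hpp6.minimalPeriod_dvd
  have hppos : 0 < p := hpdef ▸ hpp.minimalPeriod_pos hm0
  have hple : p ≤ 5 := le_trans (Nat.le_of_dvd hm0 hdvd) hm5
  have hp3 : p ≤ 3 := by
    interval_cases p <;> first | omega | (exfalso; revert hdvd6; decide)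
  -- every vertex is among the first p origins of the orbit of c
  have hsub : (Finset.univ : Finset V) ⊆
      (Finset.range p).image fun r => ((nxt hreg)^[r] c).fst := by
    intro v _
    obtain ⟨i, hi⟩ := surj hreg hconn hper6 c v
    refine Finset.mem_image.mpr ⟨i % p, Finset.mem_range.mpr (Nat.mod_lt _ hppos), ?_⟩
    rw [← hi, ← hpdef, Function.iterate_mod_minimalPeriod_eq]
  have hle : Fintype.card V ≤ p := by
    calc Fintype.card V = (Finset.univ : Finset V).card := Finset.card_univ.symm
      _ ≤ ((Finset.range p).image fun r => ((nxt hreg)^[r] c).fst).card :=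
          Finset.card_le_card hsub
      _ ≤ (Finset.range p).card := Finset.card_image_le
      _ = p := Finset.card_range p
  have hge := card_ge_three hreg c
  omega


lemma iterate_two (x : G.Dart) : (nxt hreg)^[2] x = nxt hreg (nxt hreg x) := by
  rw [show (2:ℕ) = 1+1 from rfl, Function.iterate_add_apply]
  rfl

lemma iterate_three (x : G.Dart) : (nxt hreg)^[3] x = nxt hreg ((nxt hreg)^[2] x) := by
  rw [show (3:ℕ) = 1+2 from rfl, Function.iterate_add_apply]
  rfl

lemma iterate_four (x : G.Dart) : (nxt hreg)^[4] x = nxt hreg ((nxt hreg)^[3] x) := by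
  rw [show (4:ℕ) = 1+3 from rfl, Function.iterate_add_apply]
  rfl

lemma symm_ne_self (x : G.Dart) : x.symm ≠ x := by
  intro h
  have := congrArg (fun d : G.Dart => d.fst) h
  exact x.snd_ne_fst this

lemma inj6 (hconn : G.Connected) (hper6 : ∀ d : G.Dart, (nxt hreg)^[6] d = d)
    (hcard3 : Fintype.card V ≠ 3) (d0 : G.Dart) :
    ∀ i j, i < 6 → j < 6 → ((nxt hreg)^[i] d0).fst = ((nxt hreg)^[j] d0).fst → i = j := by
  have main : ∀ i j, i < j → j < 6 →
      ((nxt hreg)^[i] d0).fst = ((nxt hreg)^[j] d0).fst → False := by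
    intro i j hij hj6 heq
    set ei := (nxt hreg)^[i] d0 with hei
    set ej := (nxt hreg)^[j] d0 with hej
    set pj := (nxt hreg)^[j + 5] d0 with hpj
    have hnp : nxt hreg pj = ej := pred_dart hreg hper6 j d0
    have hy : pj.symm.fst = ej.fst := by
      show pj.snd = ej.fst
      rw [← hnp, nxt_fst]
    have hxy : ej ≠ pj.symm := hnp ▸ nxt_ne hreg pj
    rcases two_darts hreg (x := ej) (y := pj.symm) rfl hy hxy heq with hA | hB
    · -- nontrivial short period
      have hm : (nxt hreg)^[j - i] ei = ei := by
        have h1 : (nxt hreg)^[j - i + i] d0 = (nxt hreg)^[j - i] ((nxt hreg)^[i] d0) :=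
          Function.iterate_add_apply _ _ _ _
        rw [hei, ← h1, show j - i + i = j from by omega, ← hej]
        exact hA.symm
      exact hcard3 (card_eq_three_of_periodic hreg hconn hper6
        (show 0 < j - i by omega) (show j - i ≤ 5 by omega) hm)
    · -- the orbit contains a reversed dart
      have hsymm : ei.symm = (nxt hreg)^[j - i - 1] ei := by
      -- ei.symm = pj = nxt^[(j-i-1)+6] ei = nxt^[j-i-1] ei
        have h4 : ei.symm = pj := by rw [hB]; simp
        have h1 : pj = (nxt hreg)^[j - i - 1 + 6 + i] d0 := by
          rw [hpj]; congr 1; omega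
        have h2 : (nxt hreg)^[j - i - 1 + 6 + i] d0 =
            (nxt hreg)^[j - i - 1 + 6] ((nxt hreg)^[i] d0) :=
          Function.iterate_add_apply _ _ _ _
        have h3 : (nxt hreg)^[j - i - 1 + 6] ei = (nxt hreg)^[j - i - 1] ei :=
          iter_period hreg hper6 _ _
        rw [h4, h1, h2, ← hei, h3]
      obtain ⟨r, hr⟩ : ∃ r, j - i - 1 = r := ⟨_, rfl⟩
      rw [hr] at hsymm
      have hr4 : r ≤ 4 := by omega
      interval_cases r
      · rw [Function.iterate_zero_apply] at hsymm
        exact symm_ne_self hreg ei hsymm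
      · rw [Function.iterate_one] at hsymm
        exact nxt_ne hreg ei hsymm.symm
      · rw [iterate_two hreg] at hsymm
        have h5 := nxt_symm_nxt hreg ei
        rw [hsymm] at h5
        have h6 := nxt_inj hreg h5
        exact symm_ne_self hreg (nxt hreg ei) h6
      · rw [iterate_three hreg] at hsymm
        have h5 := nxt_symm_nxt hreg ei
        rw [hsymm] at h5
        have h6 := nxt_inj hreg h5
        rw [iterate_two hreg] at h6
        exact nxt_ne hreg (nxt hreg ei) h6.symm
      · rw [iterate_four hreg] at hsymm
        have h5 := nxt_symm_nxt hreg ei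
        rw [hsymm] at h5
        have h6 := nxt_inj hreg h5
        have h7 := nxt_symm_nxt hreg (nxt hreg ei)
        rw [h6, iterate_three hreg] at h7
        have h8 := nxt_inj hreg h7
        exact symm_ne_self hreg ((nxt hreg)^[2] ei) h8
  intro i j hi hj heq
  rcases lt_trichotomy i j with h | h | h
  · exact absurd heq (fun hE => main i j h hj hE)
  · exact h
  · exact absurd heq.symm (fun hE => main j i h hi hE)


lemma f_mod (hper6 : ∀ d : G.Dart, (nxt hreg)^[6] d = d) (d0 : G.Dart) (i : ℕ) :
    (nxt hreg)^[i % 6] d0 = (nxt hreg)^[i] d0 :=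
  Function.IsPeriodicPt.iterate_mod_apply (hper6 d0) i

lemma adj_f (d0 : G.Dart) (n : ℕ) :
    G.Adj (((nxt hreg)^[n] d0).fst) (((nxt hreg)^[n+1] d0).fst) := by
  have h1 : (nxt hreg)^[n+1] d0 = nxt hreg ((nxt hreg)^[n] d0) :=
    Function.iterate_succ_apply' _ _ _
  rw [h1, nxt_fst]
  exact ((nxt hreg)^[n] d0).adj

lemma iso_exists (hconn : G.Connected) (hper6 : ∀ d : G.Dart, (nxt hreg)^[6] d = d)
    (hcard3 : Fintype.card V ≠ 3) (d0 : G.Dart) :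
    Nonempty (G ≃g SimpleGraph.cycleGraph 6) := by
  classical
  set f : ℕ → V := fun n => ((nxt hreg)^[n] d0).fst with hf
  have hinj := inj6 hreg hconn hper6 hcard3 d0
  set e : Fin 6 → V := fun i => f i.val with he
  have hebij : Function.Bijective e := by
    constructor
    · intro i j hij
      exact Fin.ext (hinj i.val j.val i.isLt j.isLt hij)
    · intro v
      obtain ⟨i, hi⟩ := surj hreg hconn hper6 d0 v
      exact ⟨⟨i % 6, Nat.mod_lt _ (by norm_num)⟩, by
        show f (i % 6) = v
        rw [hf]
        simp only
        rw [f_mod hreg hper6 d0 i]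
        exact hi⟩
  -- adjacency in terms of indices
  have hfwd : ∀ i : Fin 6, G.Adj (e i) (e (i + 1)) := by
    intro i
    have hval : (i + 1).val = (i.val + 1) % 6 := by
      simp [Fin.val_add]
    show G.Adj (f i.val) (f (i + 1).val)
    rw [hval, hf]
    simp only
    rw [f_mod hreg hper6 d0 (i.val + 1)]
    exact adj_f hreg d0 i.val
  have hback : ∀ i j : Fin 6, G.Adj (e i) (e j) → j = i + 1 ∨ j = i + 5 := by
    intro i j hadj
    set ei := (nxt hreg)^[i.val] d0 with hei
    set pi := (nxt hreg)^[i.val + 5] d0 with hpi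
    have hnp : nxt hreg pi = ei := pred_dart hreg hper6 i.val d0
    have hy : pi.symm.fst = ei.fst := by
      show pi.snd = ei.fst
      rw [← hnp, nxt_fst]
    have hxy : ei ≠ pi.symm := hnp ▸ nxt_ne hreg pi
    set c : G.Dart := ⟨(ei.fst, e j), hadj⟩ with hc
    rcases two_darts hreg (x := ei) (y := pi.symm) rfl hy hxy (show c.fst = ei.fst from rfl)
      with h | h
    · left
      have hsnd : e j = ei.snd := (congrArg (fun d : G.Dart => d.snd) h)
      have : e j = e (i + 1) := by
        rw [hsnd]
        have h1 : (nxt hreg)^[i.val+1] d0 = nxt hreg ((nxt hreg)^[i.val] d0) :=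
          Function.iterate_succ_apply' _ _ _
        show ei.snd = f (i + 1).val
        have hval : (i + 1).val = (i.val + 1) % 6 := by simp [Fin.val_add]
        rw [hval, hf]
        simp only
        rw [f_mod hreg hper6 d0 (i.val + 1), h1, nxt_fst, hei]
      exact hebij.1 this.symm |>.symm ▸ rfl
    · right
      have hsnd : e j = pi.fst := (congrArg (fun d : G.Dart => d.snd) h)
      have : e j = e (i + 5) := by
        rw [hsnd]
        show pi.fst = f (i + 5).val
        have hval : (i + 5).val = (i.val + 5) % 6 := by
          rw [Fin.val_add]
          rfl
        rw [hval, hf]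
        simp only
        rw [f_mod hreg hper6 d0 (i.val + 5), hpi]
      exact hebij.1 this.symm |>.symm ▸ rfl
  refine ⟨(SimpleGraph.Iso.symm ⟨Equiv.ofBijective e hebij, ?_⟩ : G ≃g _)⟩
  intro i j
  show G.Adj (e i) (e j) ↔ (SimpleGraph.cycleGraph 6).Adj i j
  rw [show (SimpleGraph.cycleGraph 6).Adj i j ↔ (i - j = 1 ∨ j - i = 1) from
    SimpleGraph.cycleGraph_adj]
  constructor
  · intro h
    rcases hback i j h with h1 | h1
    · right
      rw [h1]
      abel
    · left
      rw [h1]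
      exact (by decide : ∀ x : Fin 6, x - (x + 5) = 1) i
  · intro h
    rcases h with h | h
    · have : i = j + 1 := by
        rw [← h]
        abel
      rw [this]
      exact (hfwd j).symm
    · have : j = i + 1 := by
        rw [← h]
        abel
      rw [this]
      exact hfwd i

end GroverAux

/-- Every finite simple connected regular `6`-periodic graph is isomorphic to the cycle
graph `C_6`. -/
theorem regular_six_periodic {V : Type*} [Fintype V] [DecidableEq V]
    (G : SimpleGraph V) (k : ℕ) (hconn : G.Connected) (hreg : G.IsRegularOfDegree k)
    (hper : HasGroverPeriod G 6) :
    Nonempty (G ≃g SimpleGraph.cycleGraph 6) := by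
  classical
  open GroverAux in
  obtain ⟨hpos, h6, hmin⟩ := hper
  by_cases hE : IsEmpty G.Dart
  · exfalso
    have h1 : groverMatrix G ^ 1 = 1 := by
      ext a b
      exact (hE.false a).elim
    have := hmin 1 one_pos h1
    omega
  haveI hNE : Nonempty G.Dart := not_isEmpty_iff.mp hE
  obtain ⟨d0⟩ := hNE
  have hk1 : 1 ≤ k := by
    have h2 : 0 < G.degree d0.fst := by
      rw [SimpleGraph.degree_pos_iff_exists_adj]
      exact ⟨d0.snd, d0.adj⟩
    rw [hreg d0.fst] at h2
    omega
  have h6M : GroverAux.M G k ^ 6 = 1 := (GroverAux.M_pow_eq_one_iff hreg 6).mpr h6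
  have hk2 : k ≤ 2 := by
    by_contra h
    exact GroverAux.k_not_ge_three hreg ⟨d0⟩ h6M (by omega)
  interval_cases k
  · exfalso
    have h2 : GroverAux.M G 1 ^ 2 = 1 := GroverAux.M_one_sq hreg
    have := hmin 2 (by norm_num) ((GroverAux.M_pow_eq_one_iff hreg 2).mp h2)
    omega
  · have hper6 : ∀ d : G.Dart, (GroverAux.nxt hreg)^[6] d = d :=
      (GroverAux.M_two_pow_eq_one_iff hreg 6).mp h6M
    have hcard3 : Fintype.card V ≠ 3 := by
      intro hc
      have h3 : GroverAux.M G 2 ^ 3 = 1 :=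
        (GroverAux.M_two_pow_eq_one_iff hreg 3).mpr (GroverAux.nxt_three hreg hc)
      have := hmin 3 (by norm_num) ((GroverAux.M_pow_eq_one_iff hreg 3).mp h3)
      omega
    exact GroverAux.iso_exists hreg hconn hper6 hcard3 d0
end

section
/- Let l > 1 be an odd integer with smallest prime factor p₁, and let D(l) denote the set of positive divisors of l. Then max{ 2φ(l/d) / (μ(l/d) + φ(l/d)) : d ∈ D(l), d ≠ l } = 2 + 2/(p₁ − 2), where φ is Euler's totient function and μ the Möbius function. -/
/-- For odd `l > 1` with smallest prime factor `p₁ = l.minFac`,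
`max { 2φ(l/d) / (μ(l/d) + φ(l/d)) : d ∣ l, d ≠ l } = 2 + 2/(p₁ - 2)`. -/
theorem max_ratio_divisors (l : ℕ) (hl : 1 < l) (hlodd : Odd l) :
    IsGreatest
      {x : ℚ | ∃ d : ℕ, d ∣ l ∧ d ≠ l ∧
        x = 2 * (Nat.totient (l / d) : ℚ) /
              (((ArithmeticFunction.moebius (l / d) : ℤ) : ℚ) + (Nat.totient (l / d) : ℚ))}
      (2 + 2 / ((l.minFac : ℚ) - 2)) := by
  have hl0 : 0 < l := by omega
  have hpprime : Nat.Prime l.minFac := Nat.minFac_prime (by omega)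
  have hpodd : Odd l.minFac := hlodd.of_dvd_nat l.minFac_dvd
  have hp3 : 3 ≤ l.minFac := by
    have h2 := hpprime.two_le
    have := Nat.odd_iff.mp hpodd
    omega
  have hP3 : (3 : ℚ) ≤ (l.minFac : ℚ) := by exact_mod_cast hp3
  -- key totient bound
  have key : ∀ m : ℕ, m ∣ l → 1 < m → l.minFac - 1 ≤ m.totient := by
    intro m hm hm1
    have hmp : Nat.Prime m.minFac := Nat.minFac_prime (by omega)
    have h1 : l.minFac ≤ m.minFac :=
      Nat.minFac_le_of_dvd hmp.two_le (m.minFac_dvd.trans hm)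
    have h2 : (m.minFac).totient ∣ m.totient := Nat.totient_dvd_of_dvd m.minFac_dvd
    have h3 : 0 < m.totient := Nat.totient_pos.mpr (by omega)
    have h4 : (m.minFac).totient ≤ m.totient := Nat.le_of_dvd h3 h2
    rw [Nat.totient_prime hmp] at h4
    omega
  constructor
  · -- membership: d = l / minFac
    refine ⟨l / l.minFac, Nat.div_dvd_of_dvd l.minFac_dvd, ?_, ?_⟩
    · have : l / l.minFac < l := Nat.div_lt_self hl0 hpprime.one_lt
      omega
    · rw [Nat.div_div_self l.minFac_dvd (by omega)]
      rw [Nat.totient_prime hpprime, ArithmeticFunction.moebius_apply_prime hpprime]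
      have hc : ((l.minFac - 1 : ℕ) : ℚ) = (l.minFac : ℚ) - 1 := by
        have : (1:ℕ) ≤ l.minFac := by omega
        push_cast [this]; ring
      rw [hc]
      push_cast
      have h1 : (l.minFac : ℚ) - 2 ≠ 0 := by nlinarith
      have h2 : (-1 : ℚ) + ((l.minFac : ℚ) - 1) ≠ 0 := by
        intro h; apply h1; linarith
      field_simp
      ring
  · -- upper bound
    rintro x ⟨d, hd, hdl, rfl⟩
    set m := l / d with hmdef
    have hmdvd : m ∣ l := Nat.div_dvd_of_dvd hd
    have hmm : m * d = l := Nat.div_mul_cancel hd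
    clear_value m
    have hm1 : 1 < m := by
      have hd0 : 0 < d := Nat.pos_of_dvd_of_pos hd hl0
      rcases Nat.lt_or_ge m 2 with h | h
      · have h' : m = 0 ∨ m = 1 := by omega
        rcases h' with h' | h' <;> subst h' <;> simp at hmm <;> omega
      · exact h
    have hφ := key m hmdvd hm1
    have hφQ : (l.minFac : ℚ) - 1 ≤ (m.totient : ℚ) := by
      have : ((l.minFac - 1 : ℕ) : ℚ) ≤ (m.totient : ℚ) := by exact_mod_cast hφ
      have hc : ((l.minFac - 1 : ℕ) : ℚ) = (l.minFac : ℚ) - 1 := by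
        have : (1:ℕ) ≤ l.minFac := by omega
        push_cast [this]; ring
      linarith [hc ▸ this]
    set φQ : ℚ := (m.totient : ℚ) with hφQdef
    have hφ2 : (2:ℚ) ≤ φQ := by linarith
    have hP2 : (0:ℚ) < (l.minFac : ℚ) - 2 := by linarith
    have hμ : ArithmeticFunction.moebius m = -1 ∨ ArithmeticFunction.moebius m = 0
        ∨ ArithmeticFunction.moebius m = 1 := by
      by_cases hs : Squarefree m
      · rw [ArithmeticFunction.moebius_apply_of_squarefree hs]
        rcases Nat.even_or_odd (ArithmeticFunction.cardFactors m) with he | ho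
        · right; right; rw [he.neg_one_pow]
        · left; rw [ho.neg_one_pow]
      · right; left; exact ArithmeticFunction.moebius_eq_zero_of_not_squarefree hs
    rcases hμ with hμ | hμ | hμ <;> rw [hμ]
    · -- μ = -1 : value = 2φ/(φ-1) = 2 + 2/(φ-1) ≤ 2 + 2/(P-2)
      push_cast
      have h1 : (0:ℚ) < φQ - 1 := by linarith
      have h2' : (-1:ℚ) + φQ ≠ 0 := by linarith
      have h3' : φQ - 1 ≠ 0 := by linarith
      have heq : 2 * φQ / (-1 + φQ) = 2 + 2 / (φQ - 1) := by
        rw [div_eq_iff h2']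
        field_simp
        ring
      rw [heq]
      have : (2:ℚ) / (φQ - 1) ≤ 2 / ((l.minFac : ℚ) - 2) := by
        apply div_le_div_of_nonneg_left (by norm_num) hP2 (by linarith)
      linarith
    · push_cast
      have : 2 * φQ / (0 + φQ) = 2 := by
        field_simp
        ring
      rw [this]
      have : (0:ℚ) ≤ 2 / ((l.minFac : ℚ) - 2) := by positivity
      linarith
    · push_cast
      have h1 : (0:ℚ) < 1 + φQ := by linarith
      have : 2 * φQ / (1 + φQ) ≤ 2 := by
        rw [div_le_iff₀ h1]; linarith
      have h2 : (0:ℚ) ≤ 2 / ((l.minFac : ℚ) - 2) := by positivity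
      linarith
end
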